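/- Let R be a commutative ring and M an invertible R-module, i.e., a finitely generated projective R-module whose localization at every prime ideal of R is free of rank 1. Let f, g ∈ M be two elements that generate M, i.e., the R-submodule of M spanned by {f, g} is all of M. Set N = Hom_R(M, R), and consider the R[X]-module N[X] = R[X] ⊗_R N. Let F, G : N[X] → R[X] be the R[X]-linear extensions of the evaluation maps N → R given by φ ↦ φ f and φ ↦ φ g respectively. Then the R[X]-linear map N[X] → N[X] × R[X] × R[X] sending ψ to (X • ψ, F ψ, G ψ) is injective, and its cokernel Q is a finitely generated projective R[X]-module whose localization at every prime ideal of R[X] is free of rank 2; in particular Q is flat over R[X]. -/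

import Mathlib

open TensorProduct

/-- An *invertible module* over a commutative ring `R`: a finitely generated projective
`R`-module whose localization at every prime ideal of `R` is free of rank 1. -/
def IsInvertibleModule (R : Type*) [CommRing R] (M : Type*) [AddCommGroup M]
    [Module R M] : Prop :=
  Module.Finite R M ∧ Module.Projective R M ∧
    ∀ (p : Ideal R) [p.IsPrime],
      Module.Free (Localization.AtPrime p) (LocalizedModule p.primeCompl M) ∧
      Module.finrank (Localization.AtPrime p) (LocalizedModule p.primeCompl M) = 1

/-- Given `R[X]`-linear maps `F G : N[X] → R[X]` (where `N[X] = R[X] ⊗[R] N` and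
`N = Hom_R(M,R)`), the `R[X]`-linear map `N[X] → N[X] × R[X] × R[X]`,
`ψ ↦ (X • ψ, F ψ, G ψ)`. -/
noncomputable def xShiftEvalMap (R : Type*) [CommRing R] (M : Type*) [AddCommGroup M] [Module R M]
    (F G : (Polynomial R ⊗[R] (M →ₗ[R] R)) →ₗ[Polynomial R] Polynomial R) :
    (Polynomial R ⊗[R] (M →ₗ[R] R)) →ₗ[Polynomial R]
      (Polynomial R ⊗[R] (M →ₗ[R] R)) × Polynomial R × Polynomial R :=
  LinearMap.prod
    ((Polynomial.X : Polynomial R) •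
      (LinearMap.id : (Polynomial R ⊗[R] (M →ₗ[R] R)) →ₗ[Polynomial R]
        (Polynomial R ⊗[R] (M →ₗ[R] R))))
    (LinearMap.prod F G)

/-- The cokernel `Q` of the map `ψ ↦ (X • ψ, F ψ, G ψ)`. -/
abbrev xShiftEvalCoker (R : Type*) [CommRing R] (M : Type*) [AddCommGroup M] [Module R M]
    (F G : (Polynomial R ⊗[R] (M →ₗ[R] R)) →ₗ[Polynomial R] Polynomial R) : Type _ :=
  ((Polynomial R ⊗[R] (M →ₗ[R] R)) × Polynomial R × Polynomial R) ⧸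
    LinearMap.range (xShiftEvalMap R M F G)

/-!
Since `M` is projective and `(a, b) ↦ a • f + b • g` is onto, a section of it gives
`n₁ n₂ ∈ N` with `x = n₁ x • f + n₂ x • g`, i.e. `φ = φ f • n₁ + φ g • n₂` for all `φ ∈ N`.
Hence `(p, q) ↦ p ⊗ n₁ + q ⊗ n₂` is a left inverse `S` of `T = (F, G) : N[X] → R[X]²`.
For any `T` with a left inverse `S` and any endomorphism `A`, the map `ψ ↦ (A ψ, T ψ)` is
injective, and `(v, w) ↦ w + T (v - (A + 1) (S w))` identifies its cokernel with the target
of `T`. So `Q ≅ R[X]²` is free of rank 2.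
-/

lemma Module.Projective.exists_dual_pair_of_span_pair {R M : Type*} [CommRing R]
    [AddCommGroup M] [Module R M] [Module.Projective R M] {f g : M}
    (hfg : Submodule.span R ({f, g} : Set M) = ⊤) :
    ∃ n₁ n₂ : M →ₗ[R] R, ∀ φ : M →ₗ[R] R, φ f • n₁ + φ g • n₂ = φ := by
  let π : R × R →ₗ[R] M :=
    (LinearMap.toSpanSingleton R M f).coprod (LinearMap.toSpanSingleton R M g)
  have hπ : Function.Surjective π := fun x => by
    obtain ⟨a, b, hab⟩ := Submodule.mem_span_pair.mp (hfg ▸ Submodule.mem_top : x ∈ _)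
    exact ⟨(a, b), hab⟩
  obtain ⟨σ, hσ⟩ := Module.projective_lifting_property π LinearMap.id hπ
  refine ⟨LinearMap.fst R R R ∘ₗ σ, LinearMap.snd R R R ∘ₗ σ,
    fun φ => LinearMap.ext fun x => ?_⟩
  have hx : (σ x).1 • f + (σ x).2 • g = x := LinearMap.congr_fun hσ x
  simpa [mul_comm] using congrArg φ hx

lemma LinearMap.injective_prod_of_leftInverse {R U V W : Type*} [Semiring R] [AddCommMonoid U]
    [AddCommMonoid V] [AddCommMonoid W] [Module R U] [Module R V] [Module R W]
    (A : V →ₗ[R] U) {T : V →ₗ[R] W} {S : W →ₗ[R] V} (hST : S ∘ₗ T = LinearMap.id) :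
    Function.Injective (A.prod T) :=
  fun _ _ h => Function.LeftInverse.injective (g := S) (LinearMap.congr_fun hST)
    (congrArg Prod.snd h)

section LeftInverse

variable {R V W : Type*} [Ring R] [AddCommGroup V] [AddCommGroup W] [Module R V] [Module R W]
  (A : V →ₗ[R] V) {T : V →ₗ[R] W} {S : W →ₗ[R] V}

variable (T S) in
def LinearMap.prodCokerProj : V × W →ₗ[R] W :=
  LinearMap.snd R V W +
    T ∘ₗ (LinearMap.fst R V W - (A + LinearMap.id) ∘ₗ S ∘ₗ LinearMap.snd R V W)

lemma LinearMap.prodCokerProj_apply (x : V × W) :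
    A.prodCokerProj T S x = x.2 + T (x.1 - (A (S x.2) + S x.2)) := rfl

lemma LinearMap.surjective_prodCokerProj : Function.Surjective (A.prodCokerProj T S) :=
  fun w => ⟨(A (S w) + S w, w), by simp [prodCokerProj_apply]⟩

variable (hST : S ∘ₗ T = LinearMap.id)
include hST

lemma LinearMap.ker_prodCokerProj :
    LinearMap.ker (A.prodCokerProj T S) = LinearMap.range (A.prod T) := by
  have hS : ∀ v, S (T v) = v := LinearMap.congr_fun hST
  apply le_antisymm
  · rintro ⟨v, w⟩ hvw
    rw [LinearMap.mem_ker, prodCokerProj_apply] at hvw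
    have hv : v = A (S w) := by
      have := congrArg S hvw
      simp only [map_add, map_sub, hS, map_zero] at this
      linear_combination (norm := module) this
    refine ⟨S w, Prod.ext hv.symm ?_⟩
    simp only [hv, sub_add_cancel_left, map_neg] at hvw
    exact (add_neg_eq_zero.mp hvw).symm
  · rintro _ ⟨ψ, rfl⟩
    simp [prodCokerProj_apply, hS]

noncomputable def LinearMap.prodQuotRangeEquivOfLeftInverse :
    ((V × W) ⧸ LinearMap.range (A.prod T)) ≃ₗ[R] W :=
  (Submodule.quotEquivOfEq _ _ (A.ker_prodCokerProj hST).symm).trans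
    ((A.prodCokerProj T S).quotKerEquivOfSurjective A.surjective_prodCokerProj)

end LeftInverse

lemma TensorProduct.coprod_toSpanSingleton_comp_prod_eq_id {R A N : Type*} [CommSemiring R]
    [CommSemiring A] [Algebra R A] [AddCommMonoid N] [Module R N] {a b : N → R} {n₁ n₂ : N}
    (hab : ∀ φ, a φ • n₁ + b φ • n₂ = φ) {F G : A ⊗[R] N →ₗ[A] A}
    (hF : ∀ φ, F (1 ⊗ₜ φ) = algebraMap R A (a φ))
    (hG : ∀ φ, G (1 ⊗ₜ φ) = algebraMap R A (b φ)) :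
    ((LinearMap.toSpanSingleton A _ (1 ⊗ₜ[R] n₁)).coprod
      (LinearMap.toSpanSingleton A _ (1 ⊗ₜ[R] n₂))) ∘ₗ F.prod G = LinearMap.id := by
  refine TensorProduct.AlgebraTensorModule.ext fun x φ => ?_
  have hx : x ⊗ₜ[R] φ = x • (1 ⊗ₜ[R] φ : A ⊗[R] N) := by rw [smul_tmul', smul_eq_mul, mul_one]
  rw [hx, map_smul, map_smul]
  congr 1
  change F (1 ⊗ₜ φ) • (1 ⊗ₜ[R] n₁) + G (1 ⊗ₜ φ) • (1 ⊗ₜ[R] n₂) = (1 ⊗ₜ φ : A ⊗[R] N)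
  rw [hF, hG, algebraMap_smul, algebraMap_smul, ← tmul_smul, ← tmul_smul, ← tmul_add, hab]

lemma Module.Free.localizedModule_atPrime {R Q : Type*} [CommRing R] [AddCommGroup Q]
    [Module R Q] [Module.Free R Q] (p : Ideal R) [p.IsPrime] :
    Module.Free (Localization.AtPrime p) (LocalizedModule p.primeCompl Q) ∧
      Module.finrank (Localization.AtPrime p) (LocalizedModule p.primeCompl Q) =
        Module.finrank R Q :=
  ⟨Module.free_of_isLocalizedModule p.primeCompl (LocalizedModule.mkLinearMap p.primeCompl Q),
    Module.finrank_of_isLocalizedModule_of_free _ p.primeCompl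
      (LocalizedModule.mkLinearMap p.primeCompl Q)⟩

/-- Let `R` be a commutative ring, `M` an invertible `R`-module and
`f, g ∈ M` generators of `M`. Set `N = Hom_R(M,R)` and let `F, G : N[X] → R[X]` be the
`R[X]`-linear extensions of the evaluation maps `φ ↦ φ f` and `φ ↦ φ g`
(here `N[X] = R[X] ⊗[R] N`). Then the `R[X]`-linear map `N[X] → N[X] × R[X] × R[X]`,
`ψ ↦ (X • ψ, F ψ, G ψ)`, is injective, and its cokernel `Q` is a finitely generated
projective `R[X]`-module whose localization at every prime ideal of `R[X]` is free of
rank 2; in particular `Q` is flat over `R[X]`. -/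
theorem xShiftEvalMap_injective_coker_rank_two (R : Type*) [CommRing R] (M : Type*)
    [AddCommGroup M] [Module R M] (hM : IsInvertibleModule R M) (f g : M)
    (hfg : Submodule.span R ({f, g} : Set M) = ⊤)
    (F G : (Polynomial R ⊗[R] (M →ₗ[R] R)) →ₗ[Polynomial R] Polynomial R)
    (hF : ∀ φ : M →ₗ[R] R, F ((1 : Polynomial R) ⊗ₜ[R] φ) = Polynomial.C (φ f))
    (hG : ∀ φ : M →ₗ[R] R, G ((1 : Polynomial R) ⊗ₜ[R] φ) = Polynomial.C (φ g)) :
    Function.Injective (xShiftEvalMap R M F G) ∧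
    Module.Finite (Polynomial R) (xShiftEvalCoker R M F G) ∧
    Module.Projective (Polynomial R) (xShiftEvalCoker R M F G) ∧
    (∀ (p : Ideal (Polynomial R)) [p.IsPrime],
      Module.Free (Localization.AtPrime p)
        (LocalizedModule p.primeCompl (xShiftEvalCoker R M F G)) ∧
      Module.finrank (Localization.AtPrime p)
        (LocalizedModule p.primeCompl (xShiftEvalCoker R M F G)) = 2) ∧
    Module.Flat (Polynomial R) (xShiftEvalCoker R M F G) := by
  obtain ⟨n₁, n₂, hn⟩ := hM.2.1.exists_dual_pair_of_span_pair hfg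
  have hST := TensorProduct.coprod_toSpanSingleton_comp_prod_eq_id (A := Polynomial R)
    (a := fun φ : M →ₗ[R] R => φ f) (b := fun φ => φ g) hn hF hG
  let e : xShiftEvalCoker R M F G ≃ₗ[Polynomial R] Polynomial R × Polynomial R :=
    LinearMap.prodQuotRangeEquivOfLeftInverse _ hST
  have : Module.Free (Polynomial R) (xShiftEvalCoker R M F G) := .of_equiv e.symm
  have : Module.Finite (Polynomial R) (xShiftEvalCoker R M F G) := .equiv e.symm
  refine ⟨LinearMap.injective_prod_of_leftInverse _ hST, inferInstance, inferInstance,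
    fun p _ => ?_, inferInstance⟩
  have := (algebraMap (Polynomial R) (Localization.AtPrime p)).domain_nontrivial
  obtain ⟨hfree, hrank⟩ :=
    Module.Free.localizedModule_atPrime (Q := xShiftEvalCoker R M F G) p
  exact ⟨hfree, by rw [hrank, e.finrank_eq, Module.finrank_prod, Module.finrank_self]⟩
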